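/- Let X be a rack, G an abelian group, and suppose the families of automorphisms t_{x,y} : G → G and endomorphisms s_{x,y} : G → G satisfy the three extension-rack relations, so that X × G is a rack under (x, g) ▷ (y, h) = (x ▷ y, t_{x,y}(g) + s_{x,y}(h)). Let π denote the kink map of X and Π the kink map of X × G. Then for every positive integer N and every (x, g) ∈ X × G, Π^N(x, g) = (π^N(x), F_{N,x}(g)) where F_{N,x} = (t_{π^{N-1}(x),π^{N-1}(x)} + s_{π^{N-1}(x),π^{N-1}(x)}) ∘ ⋯ ∘ (t_{π(x),π(x)} + s_{π(x),π(x)}) ∘ (t_{x,x} + s_{x,x}). Consequently Π^N = id_{X×G} if and only if π^N = id_X and for every x ∈ X the composite ∏_{k=0}^{N-1} (t_{π^k(x),π^k(x)} + s_{π^k(x),π^k(x)}) equals id_G. -/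
import Mathlib


/-- A rack: a set with a binary operation `act = ▷` such that for all `x y` there is
a unique `z` with `x = z ▷ y`, and `(x ▷ y) ▷ z = (x ▷ z) ▷ (y ▷ z)`. -/
structure PaperRack (X : Type*) where
  act : X → X → X
  exu : ∀ x y : X, ∃! z : X, x = act z y
  dist : ∀ x y z : X, act (act x y) z = act (act x z) (act y z)

/-- The extension operation on `X × G`:
`(x, g) ▷ (y, h) = (x ▷ y, t_{x,y}(g) + s_{x,y}(h))`. -/
def extAct {X G : Type*} [AddCommGroup G] (act : X → X → X)
    (t s : X → X → (G →+ G)) : X × G → X × G → X × G :=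
  fun p q => (act p.1 q.1, t p.1 q.1 p.2 + s p.1 q.1 q.2)

/-- The composite
`F_{N,x} = (t_{π^{N-1}x,π^{N-1}x} + s_{π^{N-1}x,π^{N-1}x}) ∘ ⋯ ∘ (t_{x,x} + s_{x,x})`,
with the `k = 0` factor applied first. -/
def Fcomp {X G : Type*} [AddCommGroup G] (π : X → X)
    (t s : X → X → (G →+ G)) : ℕ → X → G → G
  | 0, _, g => g
  | n + 1, x, g =>
      t (π^[n] x) (π^[n] x) (Fcomp π t s n x g) + s (π^[n] x) (π^[n] x) (Fcomp π t s n x g)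

/-- For a rack `X`, abelian group `G`, and families `t_{x,y}`
(automorphisms) and `s_{x,y}` (endomorphisms) satisfying the three extension-rack
relations, so that `X × G` is a rack: letting `π` be the kink map of `X` and `Π` the
kink map of `X × G`, for every positive `N` one has
`Π^[N] (x,g) = (π^[N] x, F_{N,x} g)`; consequently `Π^[N] = id` iff `π^[N] = id` and
every composite `∏_{k=0}^{N-1} (t_{π^k x, π^k x} + s_{π^k x, π^k x})` is `id_G`. -/
theorem stmt_10 {X G : Type*} [AddCommGroup G] (R : PaperRack X)
    (t s : X → X → (G →+ G))
    (ht : ∀ x y : X, Function.Bijective (t x y))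
    (rel1 : ∀ x y z : X, ∀ g : G,
      t (R.act x y) z (t x y g) = t (R.act x z) (R.act y z) (t x z g))
    (rel2 : ∀ x y z : X, ∀ g : G,
      t (R.act x y) z (s x y g) = s (R.act x z) (R.act y z) (t y z g))
    (rel3 : ∀ x y z : X, ∀ g : G,
      s (R.act x y) z g = s (R.act x z) (R.act y z) (s y z g)
        + t (R.act x z) (R.act y z) (s x z g))
    (π : X → X) (hπ : π = fun x : X => R.act x x)
    (K : X × G → X × G) (hK : K = fun p : X × G => extAct R.act t s p p) :
    (∀ N : ℕ, 0 < N → ∀ (x : X) (g : G),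
      K^[N] (x, g) = (π^[N] x, Fcomp π t s N x g)) ∧
    (∀ N : ℕ, 0 < N →
      (K^[N] = id ↔ (π^[N] = id ∧ ∀ (x : X) (g : G), Fcomp π t s N x g = g))) := by
  have main : ∀ N : ℕ, ∀ (x : X) (g : G),
      K^[N] (x, g) = (π^[N] x, Fcomp π t s N x g) := by
    intro N
    induction N with
    | zero => intro x g; simp [Fcomp]
    | succ n ih =>
      intro x g
      rw [Function.iterate_succ_apply', ih, Function.iterate_succ_apply']
      simp [hK, extAct, Fcomp, hπ]
  constructor
  · intro N _ x g; exact main N x g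
  · intro N hN
    constructor
    · intro h
      constructor
      · funext x
        have := main N x 0
        rw [h] at this
        exact ((Prod.ext_iff.mp this).1).symm
      · intro x g
        have := main N x g
        rw [h] at this
        exact ((Prod.ext_iff.mp this).2).symm
    · rintro ⟨h1, h2⟩
      funext p
      obtain ⟨x, g⟩ := p
      rw [main N x g, h1, h2]
      rfl
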